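/- arXiv:1808.05924 — 2 statements merged into one kernel-verified Lean document; each statement's English description precedes it below -/
import Mathlib

section
/- Let X be a real n×p matrix with rank(X) = p, X† = (XᵀX)⁻¹Xᵀ, S ∈ ℝ^{r×n} with p ≤ r ≤ n, (SX)† the Moore–Penrose inverse of SX, P = X(SX)†S, and P_X = X(XᵀX)⁻¹Xᵀ. Then, in the spectral (Euclidean operator) norm, ‖X†(PPᵀ − P_X)(X†)ᵀ‖₂ ≤ ‖(XᵀX)⁻¹‖₂ · ‖PPᵀ − P_X‖₂. Consequently, the relative difference between the conditional variance V[β̃|S] = σ²(X†P)(X†P)ᵀ and the model variance V[β̂] = σ²(XᵀX)⁻¹ satisfies ‖V[β̃|S] − V[β̂]‖₂ / ‖V[β̂]‖₂ ≤ ‖PPᵀ − P_X‖₂ for any σ² > 0. -/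
open Matrix

/-- The spectral (Euclidean operator) norm of a real matrix. -/
noncomputable def specNorm {a b : ℕ} (M : Matrix (Fin a) (Fin b) ℝ) : ℝ :=
  ‖LinearMap.toContinuousLinearMap (Matrix.toEuclideanLin M)‖

open scoped Matrix.Norms.L2Operator

lemma specNorm_eq_l2norm {a b : ℕ} (M : Matrix (Fin a) (Fin b) ℝ) : specNorm M = ‖M‖ := rfl

lemma specNorm_nonneg {a b : ℕ} (M : Matrix (Fin a) (Fin b) ℝ) : 0 ≤ specNorm M := by
  rw [specNorm_eq_l2norm]; exact norm_nonneg _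

lemma specNorm_mul_le {a b c : ℕ} (A : Matrix (Fin a) (Fin b) ℝ) (B : Matrix (Fin b) (Fin c) ℝ) :
    specNorm (A * B) ≤ specNorm A * specNorm B := by
  simp only [specNorm_eq_l2norm]; exact Matrix.l2_opNorm_mul A B

lemma specNorm_transpose {a b : ℕ} (A : Matrix (Fin a) (Fin b) ℝ) :
    specNorm Aᵀ = specNorm A := by
  simp only [specNorm_eq_l2norm]
  have := Matrix.l2_opNorm_conjTranspose A
  rwa [Matrix.conjTranspose_eq_transpose_of_trivial] at this

lemma specNorm_mul_transpose_self {a b : ℕ} (A : Matrix (Fin a) (Fin b) ℝ) :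
    specNorm (A * Aᵀ) = specNorm A * specNorm A := by
  have h1 := Matrix.l2_opNorm_conjTranspose_mul_self Aᵀ
  rw [Matrix.conjTranspose_eq_transpose_of_trivial, Matrix.transpose_transpose] at h1
  have h2 : specNorm Aᵀ = specNorm A := specNorm_transpose A
  simp only [specNorm_eq_l2norm] at h2 ⊢
  rw [h1, h2]

lemma specNorm_smul {a b : ℕ} (c : ℝ) (A : Matrix (Fin a) (Fin b) ℝ) :
    specNorm (c • A) = |c| * specNorm A := by
  simp only [specNorm_eq_l2norm]
  rw [norm_smul, Real.norm_eq_abs]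

/-- Corollary 3, conditional variance part:
`‖X†(PPᵀ - P_X)(X†)ᵀ‖₂ ≤ ‖(XᵀX)⁻¹‖₂ ‖PPᵀ - P_X‖₂`, and consequently the relative
difference between the conditional variance `σ²(X†P)(X†P)ᵀ` and the model variance
`σ²(XᵀX)⁻¹` is bounded by `‖PPᵀ - P_X‖₂` for every `σ² > 0`. -/
theorem relative_conditional_variance_bound
    {n p r : ℕ} (X : Matrix (Fin n) (Fin p) ℝ) (hX : X.rank = p)
    (S : Matrix (Fin r) (Fin n) ℝ) (hpr : p ≤ r) (hrn : r ≤ n)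
    (Y : Matrix (Fin p) (Fin r) ℝ)
    (hp1 : (S * X) * Y * (S * X) = S * X)
    (hp2 : Y * ((S * X) * Y) = Y)
    (hp3 : ((S * X) * Y)ᵀ = (S * X) * Y)
    (hp4 : (Y * (S * X))ᵀ = Y * (S * X))
    (Xd : Matrix (Fin p) (Fin n) ℝ) (hXd : Xd = (Xᵀ * X)⁻¹ * Xᵀ)
    (P : Matrix (Fin n) (Fin n) ℝ) (hP : P = X * Y * S)
    (PX : Matrix (Fin n) (Fin n) ℝ) (hPX : PX = X * (Xᵀ * X)⁻¹ * Xᵀ) :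
    specNorm (Xd * (P * Pᵀ - PX) * Xdᵀ) ≤
      specNorm ((Xᵀ * X)⁻¹) * specNorm (P * Pᵀ - PX) ∧
    (∀ σ2 : ℝ, 0 < σ2 →
      specNorm (σ2 • ((Xd * P) * (Xd * P)ᵀ) - σ2 • (Xᵀ * X)⁻¹) /
          specNorm (σ2 • ((Xᵀ * X)⁻¹ : Matrix (Fin p) (Fin p) ℝ)) ≤
        specNorm (P * Pᵀ - PX)) := by
  -- invertibility of XᵀX
  have hrank : (Xᵀ * X).rank = p := by rw [Matrix.rank_transpose_mul_self, hX]
  have hsurj : Function.Surjective (Xᵀ * X).mulVecLin := by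
    rw [← LinearMap.range_eq_top]
    apply Submodule.eq_top_of_finrank_eq
    rw [← Matrix.rank, hrank]
    simp
  have hU : IsUnit (Xᵀ * X) := Matrix.mulVec_surjective_iff_isUnit.mp hsurj
  have hdet : IsUnit (Xᵀ * X).det := (Matrix.isUnit_iff_isUnit_det _).mp hU
  have hinv : (Xᵀ * X)⁻¹ * (Xᵀ * X) = 1 := Matrix.nonsing_inv_mul _ hdet
  -- Xdᵀ = X * (XᵀX)⁻¹
  have hXdT : Xdᵀ = X * (Xᵀ * X)⁻¹ := by
    rw [hXd, Matrix.transpose_mul, Matrix.transpose_nonsing_inv, Matrix.transpose_mul,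
      Matrix.transpose_transpose]
  -- Xd * X = 1
  have hXdX : Xd * X = 1 := by rw [hXd, Matrix.mul_assoc, hinv]
  -- Xd * Xdᵀ = (XᵀX)⁻¹
  have hXdXdT : Xd * Xdᵀ = (Xᵀ * X)⁻¹ := by
    rw [hXdT, ← Matrix.mul_assoc, hXdX, Matrix.one_mul]
  -- key bound
  have key : ∀ M : Matrix (Fin n) (Fin n) ℝ,
      specNorm (Xd * M * Xdᵀ) ≤ specNorm ((Xᵀ * X)⁻¹) * specNorm M := by
    intro M
    calc specNorm (Xd * M * Xdᵀ) ≤ specNorm (Xd * M) * specNorm Xdᵀ :=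
          specNorm_mul_le _ _
      _ ≤ specNorm Xd * specNorm M * specNorm Xdᵀ := by
          apply mul_le_mul_of_nonneg_right (specNorm_mul_le _ _) (specNorm_nonneg _)
      _ = (specNorm Xd * specNorm Xd) * specNorm M := by
          rw [specNorm_transpose]; ring
      _ = specNorm ((Xᵀ * X)⁻¹) * specNorm M := by
          rw [← specNorm_mul_transpose_self, hXdXdT]
  refine ⟨key _, ?_⟩
  intro σ2 hσ2
  -- rewrite the numerator
  have hXdPX : Xd * PX * Xdᵀ = (Xᵀ * X)⁻¹ := by
    have h1 : Xd * PX = Xd := by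
      rw [hPX, ← Matrix.mul_assoc, ← Matrix.mul_assoc, hXdX, Matrix.one_mul, ← hXd]
    rw [h1, hXdXdT]
  have hnum : σ2 • ((Xd * P) * (Xd * P)ᵀ) - σ2 • ((Xᵀ * X)⁻¹ : Matrix (Fin p) (Fin p) ℝ)
      = σ2 • (Xd * (P * Pᵀ - PX) * Xdᵀ) := by
    have hPP : (Xd * P) * (Xd * P)ᵀ = Xd * (P * Pᵀ) * Xdᵀ := by
      rw [Matrix.transpose_mul]
      simp only [Matrix.mul_assoc]
    have h2 : Xd * (P * Pᵀ - PX) * Xdᵀ = (Xd * P) * (Xd * P)ᵀ - (Xᵀ * X)⁻¹ := by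
      rw [Matrix.mul_sub, Matrix.sub_mul, hXdPX, ← hPP]
    rw [h2, smul_sub]
  rw [hnum, specNorm_smul, specNorm_smul, abs_of_pos hσ2,
    mul_div_mul_left _ _ (ne_of_gt hσ2)]
  rcases eq_or_lt_of_le (specNorm_nonneg ((Xᵀ * X)⁻¹ : Matrix (Fin p) (Fin p) ℝ)) with h0 | h0
  · have : specNorm (Xd * (P * Pᵀ - PX) * Xdᵀ) = 0 := by
      have := key (P * Pᵀ - PX)
      rw [← h0, zero_mul] at this
      exact le_antisymm this (specNorm_nonneg _)
    rw [this, ← h0, div_zero]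
    exact specNorm_nonneg _
  · rw [div_le_iff₀ h0]
    calc specNorm (Xd * (P * Pᵀ - PX) * Xdᵀ)
        ≤ specNorm ((Xᵀ * X)⁻¹) * specNorm (P * Pᵀ - PX) := key _
      _ = specNorm (P * Pᵀ - PX) * specNorm ((Xᵀ * X)⁻¹) := mul_comm _ _
end

section
/- Let X be a real n×p matrix with rank(X) = p, X† = (XᵀX)⁻¹Xᵀ, and β₀ ∈ ℝᵖ. On a probability space, let S : Ω → ℝ^{r×n} (p ≤ r ≤ n) be a random matrix, let Y(ω) be the Moore–Penrose inverse of S(ω)X for each ω, and set P(ω) = X Y(ω) S(ω) and P₀(ω) = Y(ω)S(ω)X. Let ε : Ω → ℝⁿ be independent of S with E[ε_i] = 0 and E[ε_iε_j] = σ²δ_{ij} (σ > 0), and assume all relevant entries are square-integrable. Set y = Xβ₀ + ε and β̃ = YSy. Then the total covariance matrix of β̃ satisfies, entrywise, V[β̃] = σ² X† E[PPᵀ] (X†)ᵀ + V[P₀β₀], where E[PPᵀ] is the entrywise expectation of P(ω)P(ω)ᵀ and V[P₀β₀] is the covariance matrix of the random vector ω ↦ P₀(ω)β₀. Equivalently,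 V[β̃] = σ²(XᵀX)⁻¹ + σ² X†(E[PPᵀ] − P_X)(X†)ᵀ + V[P₀β₀] with P_X = X(XᵀX)⁻¹Xᵀ. -/
/-!
Write `G = Y S`. Then `β̃ = G y` with `y = Xβ₀ + ε`, `P₀β₀ = G Xβ₀`, and `X† P = G` because
`X† X = 1`. The Moore–Penrose inverse of `A` is the limit as `δ → 0⁺` of the Tikhonov inverses
`Aᵀ (A Aᵀ + δ)⁻¹`, which depend continuously on `A`; so `Y`, and with it `G`, is a measurable
function of `S`, hence independent of `ε`. Expanding `(G y)_k (G y)_l` and factorising every term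
by independence, the moments `E[y_s y_t] = (Xβ₀)_s (Xβ₀)_t + σ² δ_st` give
`V[β̃] = V[G Xβ₀] + σ² E[G Gᵀ] = V[P₀β₀] + σ² X† E[P Pᵀ] X†ᵀ`. The second form follows from
`X† P_X X†ᵀ = (XᵀX)⁻¹`.
-/

open Matrix MeasureTheory Filter Topology ProbabilityTheory

namespace Matrix

section MoorePenrose

variable {m n : Type*} [Fintype m] [Fintype n]

structure IsMoorePenroseInverse (A : Matrix m n ℝ) (Z : Matrix n m ℝ) : Prop where
  mul_inv_mul : A * Z * A = A
  inv_mul_inv : Z * (A * Z) = Z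
  transpose_mul_inv : (A * Z)ᵀ = A * Z
  transpose_inv_mul : (Z * A)ᵀ = Z * A

lemma isUnit_det_one_add_smul_mul_transpose [DecidableEq m] (A : Matrix m n ℝ) {δ : ℝ}
    (hδ : 0 ≤ δ) : IsUnit (1 + δ • (A * Aᵀ)).det := by
  rw [← isUnit_iff_isUnit_det]
  simpa using (PosDef.one.add_posSemidef ((posSemidef_self_mul_conjTranspose A).smul hδ)).isUnit

lemma isUnit_det_mul_transpose_add_smul_one [DecidableEq m] (A : Matrix m n ℝ) {δ : ℝ}
    (hδ : 0 < δ) : IsUnit (A * Aᵀ + δ • 1).det := by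
  rw [← isUnit_iff_isUnit_det]
  simpa using
    (PosDef.posSemidef_add (posSemidef_self_mul_conjTranspose A) (PosDef.one.smul hδ)).isUnit

noncomputable def tikhonovInv [DecidableEq m] (δ : ℝ) (A : Matrix m n ℝ) : Matrix n m ℝ :=
  Aᵀ * (A * Aᵀ + δ • 1)⁻¹

lemma continuous_tikhonovInv [DecidableEq m] {δ : ℝ} (hδ : 0 < δ) :
    Continuous (tikhonovInv (m := m) (n := n) δ) := by
  refine continuous_id.matrix_transpose.matrix_mul (continuous_iff_continuousAt.2 fun A => ?_)
  refine (continuousAt_matrix_inv _ ?_).comp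
    ((continuous_id.matrix_mul continuous_id.matrix_transpose).add continuous_const).continuousAt
  simpa [Ring.inverse_eq_inv'] using
    continuousAt_inv₀ (isUnit_det_mul_transpose_add_smul_one A hδ).ne_zero

namespace IsMoorePenroseInverse

variable [DecidableEq m] [DecidableEq n] {A : Matrix m n ℝ} {Z : Matrix n m ℝ}

lemma tikhonovInv_eq (hZ : IsMoorePenroseInverse A Z) {δ : ℝ} (hδ : 0 < δ) :
    tikhonovInv δ A = (1 + δ • (Z * Zᵀ))⁻¹ * Z := by
  have hZZA : Z * Zᵀ * Aᵀ = Z := by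
    rw [Matrix.mul_assoc, ← transpose_mul, hZ.transpose_mul_inv, hZ.inv_mul_inv]
  have hZAA : Z * (A * Aᵀ) = Aᵀ := by
    rw [← Matrix.mul_assoc, ← hZ.transpose_inv_mul, ← transpose_mul, ← Matrix.mul_assoc,
      hZ.mul_inv_mul]
  have hcomm : (1 + δ • (Z * Zᵀ)) * Aᵀ = Z * (A * Aᵀ + δ • 1) := by
    rw [Matrix.add_mul, Matrix.mul_add, Matrix.one_mul, smul_mul, hZZA, hZAA, Matrix.mul_smul,
      Matrix.mul_one]
  calc tikhonovInv δ A
      = (1 + δ • (Z * Zᵀ))⁻¹ * ((1 + δ • (Z * Zᵀ)) * Aᵀ) * (A * Aᵀ + δ • 1)⁻¹ := by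
        rw [nonsing_inv_mul_cancel_left (A := 1 + δ • (Z * Zᵀ)) Aᵀ
          (isUnit_det_one_add_smul_mul_transpose Z hδ.le), tikhonovInv]
    _ = (1 + δ • (Z * Zᵀ))⁻¹ * Z := by
        rw [hcomm, ← Matrix.mul_assoc, mul_nonsing_inv_cancel_right (A := A * Aᵀ + δ • 1) _
          (isUnit_det_mul_transpose_add_smul_one A hδ)]

lemma tendsto_tikhonovInv (hZ : IsMoorePenroseInverse A Z) :
    Tendsto (fun δ => tikhonovInv δ A) (𝓝[>] 0) (𝓝 Z) := by
  have hinv : ContinuousAt (fun δ : ℝ => (1 + δ • (Z * Zᵀ))⁻¹) 0 := by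
    refine (continuousAt_matrix_inv _ ?_).comp
      (continuous_const.add (continuous_id.smul continuous_const)).continuousAt
    simp [Ring.inverse_eq_inv']
  have hlim : Tendsto (fun δ : ℝ => (1 + δ • (Z * Zᵀ))⁻¹ * Z) (𝓝[>] 0) (𝓝 Z) := by
    simpa [Function.comp_def] using
      ((continuous_id.matrix_mul (continuous_const (y := Z))).continuousAt.comp
        hinv).tendsto.mono_left nhdsWithin_le_nhds
  exact hlim.congr' (eventually_nhdsWithin_of_forall fun δ hδ => (hZ.tikhonovInv_eq hδ).symm)

end IsMoorePenroseInverse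

end MoorePenrose

section Measurability

variable {l m n : Type*}

/-- Entrywise measurability, so that `IndepFun ε (fun ω i j => S ω i j) μ` is independence of
`ε` from the random matrix `S`. -/
noncomputable instance instMeasurableSpace {α : Type*} [MeasurableSpace α] :
    MeasurableSpace (Matrix m n α) :=
  inferInstanceAs (MeasurableSpace (m → n → α))

instance instBorelSpace [Countable m] [Countable n] : BorelSpace (Matrix m n ℝ) :=
  inferInstanceAs (BorelSpace (m → n → ℝ))

variable {Ω : Type*} {mΩ : MeasurableSpace Ω}

lemma measurable_iff_apply {A : Ω → Matrix m n ℝ} :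
    Measurable A ↔ ∀ i j, Measurable fun ω => A ω i j :=
  ⟨fun h i j => (measurable_pi_apply j).comp ((measurable_pi_apply i).comp h),
    fun h => measurable_pi_lambda _ fun i => measurable_pi_lambda _ fun j => h i j⟩

theorem _root_.Measurable.matrix_mul [Fintype m] {A : Ω → Matrix l m ℝ} {B : Ω → Matrix m n ℝ}
    (hA : Measurable A) (hB : Measurable B) : Measurable fun ω => A ω * B ω := by
  refine measurable_iff_apply.2 fun i j => ?_
  simp only [mul_apply]
  exact Finset.measurable_sum _ fun k _ =>
    (measurable_iff_apply.1 hA i k).mul (measurable_iff_apply.1 hB k j)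

theorem measurable_of_isMoorePenroseInverse [Fintype m] [Fintype n] [DecidableEq m]
    [DecidableEq n] {A : Ω → Matrix m n ℝ} {Z : Ω → Matrix n m ℝ} (hA : Measurable A)
    (hZ : ∀ ω, IsMoorePenroseInverse (A ω) (Z ω)) : Measurable Z := by
  have hpos (k : ℕ) : (0 : ℝ) < ((k : ℝ) + 1)⁻¹ := inv_pos.2 k.cast_add_one_pos
  have hδ : Tendsto (fun k : ℕ => ((k : ℝ) + 1)⁻¹) atTop (𝓝[>] 0) :=
    tendsto_nhdsWithin_iff.2 ⟨tendsto_one_div_add_atTop_nhds_zero_nat.congr fun k => one_div _,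
      Eventually.of_forall hpos⟩
  refine measurable_iff_apply.2 fun i j => measurable_of_tendsto_metrizable' atTop
    (fun k =>
      ((continuous_apply_apply i j).comp (continuous_tikhonovInv (hpos k))).measurable.comp hA)
    (tendsto_pi_nhds.2 fun ω => ?_)
  exact ((continuous_apply_apply i j).tendsto _).comp (((hZ ω).tendsto_tikhonovInv).comp hδ)

end Measurability

end Matrix

theorem ProbabilityTheory.IndepFun.of_measurable_comap_right {Ω β γ δ : Type*}
    [MeasurableSpace Ω] [MeasurableSpace β] [mγ : MeasurableSpace γ] [MeasurableSpace δ]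
    {μ : Measure Ω} {f : Ω → β} {g : Ω → γ} {h : Ω → δ} (hfg : IndepFun f g μ)
    (hh : Measurable[mγ.comap g] h) : IndepFun f h μ :=
  (IndepFun_iff_Indep _ _ _).2
    (indep_of_indep_of_le_right ((IndepFun_iff_Indep _ _ _).1 hfg) hh.comap_le)

theorem ProbabilityTheory.IndepFun.isMoorePenroseInverse_mul {Ω β p r n : Type*}
    [MeasurableSpace Ω] [MeasurableSpace β] [Fintype p] [Fintype r] [Fintype n] [DecidableEq p]
    [DecidableEq r] {μ : Measure Ω} {ε : Ω → β} {S : Ω → Matrix r n ℝ} (X : Matrix n p ℝ)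
    {Y : Ω → Matrix p r ℝ} (hind : IndepFun ε S μ)
    (hY : ∀ ω, IsMoorePenroseInverse (S ω * X) (Y ω)) : IndepFun ε (fun ω => Y ω * S ω) μ :=
  have hS : Measurable[MeasurableSpace.comap S inferInstance] S := comap_measurable S
  hind.of_measurable_comap_right
    ((measurable_of_isMoorePenroseInverse (hS.matrix_mul measurable_const) hY).matrix_mul hS)

section IndependentNoise

variable {Ω κ ι : Type*} [MeasurableSpace Ω] {μ : Measure Ω} [Fintype ι]
  {H : Ω → Matrix κ ι ℝ} {e : Ω → ι → ℝ}

lemma integral_mulVec_apply_of_indepFun (hind : IndepFun e H μ)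
    (hH : ∀ k t, Integrable (fun ω => H ω k t) μ) (he : ∀ t, Integrable (fun ω => e ω t) μ)
    (k : κ) : ∫ ω, (H ω *ᵥ e ω) k ∂μ = ∑ t, (∫ ω, H ω k t ∂μ) * ∫ ω, e ω t ∂μ := by
  have hindep (t : ι) : IndepFun (fun ω => H ω k t) (fun ω => e ω t) μ :=
    (hind.comp (measurable_pi_apply t) (measurable_iff_apply.1 measurable_id k t)).symm
  have hint (t : ι) : Integrable (fun ω => H ω k t * e ω t) μ :=
    (hindep t).integrable_mul (hH k t) (he t)
  simp only [mulVec, dotProduct]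
  rw [integral_finsetSum _ fun t _ => hint t]
  exact Finset.sum_congr rfl fun t _ =>
    (hindep t).integral_fun_mul_eq_mul_integral (hH k t).1 (he t).1

lemma integral_mulVec_apply_mul_mulVec_apply_of_indepFun (hind : IndepFun e H μ)
    (hH : ∀ k t, MemLp (fun ω => H ω k t) 2 μ) (he : ∀ t, MemLp (fun ω => e ω t) 2 μ)
    (k l : κ) :
    ∫ ω, (H ω *ᵥ e ω) k * (H ω *ᵥ e ω) l ∂μ =
      ∑ s, ∑ t, (∫ ω, H ω k s * H ω l t ∂μ) * ∫ ω, e ω s * e ω t ∂μ := by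
  have hindep (s t : ι) :
      IndepFun (fun ω => H ω k s * H ω l t) (fun ω => e ω s * e ω t) μ :=
    (hind.comp ((measurable_pi_apply s).mul (measurable_pi_apply t))
      ((measurable_iff_apply.1 measurable_id k s).mul
        (measurable_iff_apply.1 measurable_id l t))).symm
  have hHH (s t : ι) : Integrable (fun ω => H ω k s * H ω l t) μ :=
    (hH k s).integrable_mul (hH l t)
  have hee (s t : ι) : Integrable (fun ω => e ω s * e ω t) μ := (he s).integrable_mul (he t)
  have hexpand (ω : Ω) : (H ω *ᵥ e ω) k * (H ω *ᵥ e ω) l =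
      ∑ s, ∑ t, (H ω k s * H ω l t) * (e ω s * e ω t) := by
    simp only [mulVec, dotProduct, Finset.sum_mul_sum]
    exact Finset.sum_congr rfl fun s _ => Finset.sum_congr rfl fun t _ => by ring
  have hint (s t : ι) : Integrable (fun ω => (H ω k s * H ω l t) * (e ω s * e ω t)) μ :=
    (hindep s t).integrable_mul (hHH s t) (hee s t)
  simp only [hexpand]
  rw [integral_finsetSum _ fun s _ => integrable_finsetSum _ fun t _ => hint s t]
  refine Finset.sum_congr rfl fun s _ => ?_
  rw [integral_finsetSum _ fun t _ => hint s t]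
  exact Finset.sum_congr rfl fun t _ =>
    (hindep s t).integral_fun_mul_eq_mul_integral (hHH s t).1 (hee s t).1

noncomputable def covMatrix (μ : Measure Ω) (Z : Ω → κ → ℝ) : Matrix κ κ ℝ :=
  of fun k l => (∫ ω, Z ω k * Z ω l ∂μ) - (∫ ω, Z ω k ∂μ) * ∫ ω, Z ω l ∂μ

theorem covMatrix_mulVec_add_noise [IsProbabilityMeasure μ] [DecidableEq ι]
    {G : Ω → Matrix κ ι ℝ} {ε : Ω → ι → ℝ} {σ : ℝ} (c : ι → ℝ) (hind : IndepFun ε G μ)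
    (hG : ∀ k t, MemLp (fun ω => G ω k t) 2 μ) (hε : ∀ t, MemLp (fun ω => ε ω t) 2 μ)
    (hmean : ∀ t, ∫ ω, ε ω t ∂μ = 0)
    (hcov : ∀ s t, ∫ ω, ε ω s * ε ω t ∂μ = if s = t then σ ^ 2 else 0) (k l : κ) :
    covMatrix μ (fun ω => G ω *ᵥ (c + ε ω)) k l =
      covMatrix μ (fun ω => G ω *ᵥ c) k l + σ ^ 2 * ∫ ω, (G ω * (G ω)ᵀ) k l ∂μ := by
  have hy : ∀ t, MemLp (fun ω => (c + ε ω) t) 2 μ := fun t => (memLp_const (c t)).add (hε t)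
  have hc : ∀ t, MemLp (fun _ : Ω => c t) 2 μ := fun t => memLp_const (c t)
  have hindy : IndepFun (fun ω => c + ε ω) G μ :=
    hind.comp (measurable_const.add measurable_id) measurable_id
  have hindc : IndepFun (fun _ => c) G μ := indepFun_const_left c G
  have hy_mean (t : ι) : ∫ ω, (c + ε ω) t ∂μ = c t := by
    simp [integral_add, (hε t).integrable one_le_two, hmean]
  have hy_cov (s t : ι) : ∫ ω, (c + ε ω) s * (c + ε ω) t ∂μ =
      c s * c t + if s = t then σ ^ 2 else 0 := by
    have h₁ : Integrable (fun ω => c s * ε ω t) μ := ((hε t).integrable one_le_two).const_mul _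
    have h₂ : Integrable (fun ω => c t * ε ω s) μ := ((hε s).integrable one_le_two).const_mul _
    have h₃ : Integrable (fun ω => ε ω s * ε ω t) μ := (hε s).integrable_mul (hε t)
    have hexp : (fun ω => (c + ε ω) s * (c + ε ω) t) =
        fun ω => (c s * c t + (c s * ε ω t + c t * ε ω s)) + ε ω s * ε ω t := by
      funext ω
      simp only [Pi.add_apply]
      ring
    have h₁₂ : Integrable (fun ω => c s * ε ω t + c t * ε ω s) μ := h₁.add h₂
    rw [hexp, integral_add (by fun_prop) h₃, integral_add (by fun_prop) h₁₂, integral_add h₁ h₂]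
    simp [integral_const_mul, hmean, hcov]
  have hGG : ∫ ω, (G ω * (G ω)ᵀ) k l ∂μ = ∑ s, ∫ ω, G ω k s * G ω l s ∂μ := by
    simp only [mul_apply, transpose_apply]
    exact integral_finsetSum _ fun s _ => (hG k s).integrable_mul (hG l s)
  simp only [covMatrix, of_apply,
    integral_mulVec_apply_mul_mulVec_apply_of_indepFun hindy hG hy,
    integral_mulVec_apply_mul_mulVec_apply_of_indepFun hindc hG hc,
    integral_mulVec_apply_of_indepFun hindy (fun k t => (hG k t).integrable one_le_two)
      (fun t => (hy t).integrable one_le_two),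
    integral_mulVec_apply_of_indepFun hindc (fun k t => (hG k t).integrable one_le_two)
      (fun t => (hc t).integrable one_le_two), hy_mean, hy_cov, hGG]
  simp only [mul_add, mul_ite, mul_zero, Finset.sum_add_distrib, Finset.sum_ite_eq,
    Finset.mem_univ, ↓reduceIte, ← Finset.sum_mul, integral_const, probReal_univ, smul_eq_mul,
    one_mul]
  ring

end IndependentNoise

section GramInverse

variable {n p : Type*} [Fintype n] [Fintype p] [DecidableEq p]

lemma isUnit_det_transpose_mul_self {X : Matrix n p ℝ} (hX : X.rank = Fintype.card p) :
    IsUnit (Xᵀ * X).det := by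
  have hrange : LinearMap.range (Xᵀ * X).mulVecLin = ⊤ :=
    Submodule.eq_top_of_finrank_eq <| by
      rw [← rank, rank_transpose_mul_self, hX, Module.finrank_fintype_fun_eq_card]
  rw [← isUnit_iff_isUnit_det, ← mulVec_surjective_iff_isUnit]
  intro v
  obtain ⟨w, hw⟩ := hrange ▸ Submodule.mem_top (x := v)
  exact ⟨w, hw⟩

lemma gramInv_mul_transpose_mul_self {X : Matrix n p ℝ} (hX : IsUnit (Xᵀ * X).det) :
    (Xᵀ * X)⁻¹ * Xᵀ * X = 1 := by
  rw [Matrix.mul_assoc, nonsing_inv_mul _ hX]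

lemma gramInv_mul_transpose_mul_transpose {X : Matrix n p ℝ} (hX : IsUnit (Xᵀ * X).det) :
    (Xᵀ * X)⁻¹ * Xᵀ * ((Xᵀ * X)⁻¹ * Xᵀ)ᵀ = (Xᵀ * X)⁻¹ := by
  rw [transpose_mul, transpose_transpose, ← Matrix.mul_assoc,
    gramInv_mul_transpose_mul_self hX, Matrix.one_mul, transpose_nonsing_inv, transpose_mul,
    transpose_transpose]

lemma gramInv_mul_transpose_mul_hat_mul_transpose {X : Matrix n p ℝ}
    (hX : IsUnit (Xᵀ * X).det) :
    (Xᵀ * X)⁻¹ * Xᵀ * (X * (Xᵀ * X)⁻¹ * Xᵀ) * ((Xᵀ * X)⁻¹ * Xᵀ)ᵀ = (Xᵀ * X)⁻¹ := by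
  rw [Matrix.mul_assoc X, ← Matrix.mul_assoc, gramInv_mul_transpose_mul_self hX, Matrix.one_mul,
    gramInv_mul_transpose_mul_transpose hX]

end GramInverse

lemma integral_mul_mul_apply {Ω κ ι ι' κ' : Type*} [MeasurableSpace Ω] {μ : Measure Ω}
    [Fintype ι] [Fintype ι'] (A : Matrix κ ι ℝ) (B : Matrix ι' κ' ℝ) {M : Ω → Matrix ι ι' ℝ}
    (hM : ∀ i j, Integrable (fun ω => M ω i j) μ) (k : κ) (l : κ') :
    ∫ ω, (A * M ω * B) k l ∂μ = (A * of (fun i j => ∫ ω, M ω i j ∂μ) * B) k l := by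
  simp only [mul_apply, of_apply, Finset.sum_mul]
  rw [integral_finsetSum _ fun j _ => integrable_finsetSum _ fun i _ =>
    ((hM i j).const_mul _).mul_const _]
  refine Finset.sum_congr rfl fun j _ => ?_
  rw [integral_finsetSum _ fun i _ => ((hM i j).const_mul _).mul_const _]
  exact Finset.sum_congr rfl fun i _ => by rw [integral_mul_const, integral_const_mul]

theorem sketched_solution_total_variance_general
    {n p r : ℕ} (X : Matrix (Fin n) (Fin p) ℝ) (hX : X.rank = p)
    (Xd : Matrix (Fin p) (Fin n) ℝ) (hXd : Xd = (Xᵀ * X)⁻¹ * Xᵀ)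
    (PX : Matrix (Fin n) (Fin n) ℝ) (hPX : PX = X * (Xᵀ * X)⁻¹ * Xᵀ)
    {Ω : Type*} [MeasurableSpace Ω] (μ : Measure Ω) [IsProbabilityMeasure μ]
    (S : Ω → Matrix (Fin r) (Fin n) ℝ)
    (Y : Ω → Matrix (Fin p) (Fin r) ℝ)
    (hp1 : ∀ ω, (S ω * X) * Y ω * (S ω * X) = S ω * X)
    (hp2 : ∀ ω, Y ω * ((S ω * X) * Y ω) = Y ω)
    (hp3 : ∀ ω, ((S ω * X) * Y ω)ᵀ = (S ω * X) * Y ω)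
    (hp4 : ∀ ω, (Y ω * (S ω * X))ᵀ = Y ω * (S ω * X))
    (P : Ω → Matrix (Fin n) (Fin n) ℝ) (hP : ∀ ω, P ω = X * Y ω * S ω)
    (P0 : Ω → Matrix (Fin p) (Fin p) ℝ) (hP0 : ∀ ω, P0 ω = Y ω * (S ω * X))
    (β₀ : Fin p → ℝ) (σ : ℝ) (ε : Ω → Fin n → ℝ)
    (hindep : ProbabilityTheory.IndepFun ε
      ((fun ω i j => S ω i j) : Ω → Fin r → Fin n → ℝ) μ)
    (hεL2 : ∀ i, MemLp (fun ω => ε ω i) 2 μ)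
    (hεmean : ∀ i, ∫ ω, ε ω i ∂μ = 0)
    (hεcov : ∀ i j, ∫ ω, ε ω i * ε ω j ∂μ = if i = j then σ ^ 2 else 0)
    (hYSL2 : ∀ i j, MemLp (fun ω => (Y ω * S ω) i j) 2 μ)
    (hPPTint : ∀ i j, Integrable (fun ω => (P ω * (P ω)ᵀ) i j) μ)
    (EPPT : Matrix (Fin n) (Fin n) ℝ)
    (hEPPT : ∀ i j, EPPT i j = ∫ ω, (P ω * (P ω)ᵀ) i j ∂μ)
    (VP0 : Matrix (Fin p) (Fin p) ℝ)
    (hVP0 : ∀ k l, VP0 k l =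
      (∫ ω, (P0 ω *ᵥ β₀) k * (P0 ω *ᵥ β₀) l ∂μ) -
        (∫ ω, (P0 ω *ᵥ β₀) k ∂μ) * (∫ ω, (P0 ω *ᵥ β₀) l ∂μ))
    (βtilde : Ω → Fin p → ℝ)
    (hβtilde : ∀ ω, βtilde ω = Y ω *ᵥ (S ω *ᵥ (X *ᵥ β₀ + ε ω))) :
    (∀ k l, (∫ ω, βtilde ω k * βtilde ω l ∂μ) -
        (∫ ω, βtilde ω k ∂μ) * (∫ ω, βtilde ω l ∂μ) =
      (σ ^ 2 • (Xd * EPPT * Xdᵀ) + VP0) k l) ∧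
    (∀ k l, (∫ ω, βtilde ω k * βtilde ω l ∂μ) -
        (∫ ω, βtilde ω k ∂μ) * (∫ ω, βtilde ω l ∂μ) =
      (σ ^ 2 • ((Xᵀ * X)⁻¹ : Matrix (Fin p) (Fin p) ℝ) +
        σ ^ 2 • (Xd * (EPPT - PX) * Xdᵀ) + VP0) k l) := by
  set G : Ω → Matrix (Fin p) (Fin n) ℝ := fun ω => Y ω * S ω
  have hindG : IndepFun ε G μ :=
    hindep.isMoorePenroseInverse_mul X fun ω => ⟨hp1 ω, hp2 ω, hp3 ω, hp4 ω⟩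
  have hgram : IsUnit (Xᵀ * X).det := isUnit_det_transpose_mul_self (by rwa [Fintype.card_fin])
  have hXdX : Xd * X = 1 := hXd ▸ gramInv_mul_transpose_mul_self hgram
  have hXdP (ω : Ω) : Xd * P ω = G ω := by
    rw [hP, ← Matrix.mul_assoc, ← Matrix.mul_assoc, hXdX, Matrix.one_mul]
  have hsandwich (k l : Fin p) : (Xd * EPPT * Xdᵀ) k l = ∫ ω, (G ω * (G ω)ᵀ) k l ∂μ := by
    rw [show EPPT = of fun i j => ∫ ω, (P ω * (P ω)ᵀ) i j ∂μ from ext hEPPT,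
      ← integral_mul_mul_apply _ _ hPPTint]
    simp only [← Matrix.mul_assoc, hXdP, Matrix.mul_assoc (G _), ← transpose_mul]
  have hβ : βtilde = fun ω => G ω *ᵥ (X *ᵥ β₀ + ε ω) := funext fun ω => by
    rw [hβtilde, mulVec_mulVec]
  have hP0G (ω : Ω) : P0 ω *ᵥ β₀ = G ω *ᵥ (X *ᵥ β₀) := by
    rw [hP0, ← Matrix.mul_assoc, mulVec_mulVec]
  have hVP0' : VP0 = covMatrix μ fun ω => G ω *ᵥ (X *ᵥ β₀) := ext fun k l => by
    simp only [hVP0, hP0G]; rfl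
  have htotal (k l : Fin p) :
      covMatrix μ βtilde k l = (σ ^ 2 • (Xd * EPPT * Xdᵀ) + VP0) k l := by
    rw [hβ, covMatrix_mulVec_add_noise _ hindG hYSL2 hεL2 hεmean hεcov, hVP0', Matrix.add_apply,
      Matrix.smul_apply, hsandwich, smul_eq_mul, add_comm]
  have hXdPX : Xd * PX * Xdᵀ = (Xᵀ * X)⁻¹ :=
    hXd ▸ hPX ▸ gramInv_mul_transpose_mul_hat_mul_transpose hgram
  refine ⟨htotal, fun k l => (htotal k l).trans ?_⟩
  rw [Matrix.mul_sub, Matrix.sub_mul, hXdPX, smul_sub, add_sub_cancel]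

/-- total variance of the sketched solution: with a random sketching
matrix `S`, `Y(ω) = (S(ω)X)†`, `P(ω) = X Y(ω) S(ω)`, `P₀(ω) = Y(ω) S(ω) X`, and noise
`ε` independent of `S` with mean zero and covariance `σ² I_n`, the covariance matrix of
`β̃ = Y S (Xβ₀ + ε)` equals `σ² X† E[PPᵀ] (X†)ᵀ + V[P₀β₀]`, equivalently
`σ²(XᵀX)⁻¹ + σ² X†(E[PPᵀ] - P_X)(X†)ᵀ + V[P₀β₀]`. -/
theorem sketched_solution_total_variance
    {n p r : ℕ} (X : Matrix (Fin n) (Fin p) ℝ) (hX : X.rank = p)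
    (hpr : p ≤ r) (hrn : r ≤ n)
    (Xd : Matrix (Fin p) (Fin n) ℝ) (hXd : Xd = (Xᵀ * X)⁻¹ * Xᵀ)
    (PX : Matrix (Fin n) (Fin n) ℝ) (hPX : PX = X * (Xᵀ * X)⁻¹ * Xᵀ)
    {Ω : Type*} [MeasurableSpace Ω] (μ : Measure Ω) [IsProbabilityMeasure μ]
    (S : Ω → Matrix (Fin r) (Fin n) ℝ)
    (Y : Ω → Matrix (Fin p) (Fin r) ℝ)
    (hp1 : ∀ ω, (S ω * X) * Y ω * (S ω * X) = S ω * X)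
    (hp2 : ∀ ω, Y ω * ((S ω * X) * Y ω) = Y ω)
    (hp3 : ∀ ω, ((S ω * X) * Y ω)ᵀ = (S ω * X) * Y ω)
    (hp4 : ∀ ω, (Y ω * (S ω * X))ᵀ = Y ω * (S ω * X))
    (P : Ω → Matrix (Fin n) (Fin n) ℝ) (hP : ∀ ω, P ω = X * Y ω * S ω)
    (P0 : Ω → Matrix (Fin p) (Fin p) ℝ) (hP0 : ∀ ω, P0 ω = Y ω * (S ω * X))
    (β₀ : Fin p → ℝ) (σ : ℝ) (hσ : 0 < σ) (ε : Ω → Fin n → ℝ)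
    (hindep : ProbabilityTheory.IndepFun ε
      ((fun ω i j => S ω i j) : Ω → Fin r → Fin n → ℝ) μ)
    (hεL2 : ∀ i, MemLp (fun ω => ε ω i) 2 μ)
    (hεmean : ∀ i, ∫ ω, ε ω i ∂μ = 0)
    (hεcov : ∀ i j, ∫ ω, ε ω i * ε ω j ∂μ = if i = j then σ ^ 2 else 0)
    (hYSL2 : ∀ i j, MemLp (fun ω => (Y ω * S ω) i j) 2 μ)
    (hPPTint : ∀ i j, Integrable (fun ω => (P ω * (P ω)ᵀ) i j) μ)
    (EPPT : Matrix (Fin n) (Fin n) ℝ)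
    (hEPPT : ∀ i j, EPPT i j = ∫ ω, (P ω * (P ω)ᵀ) i j ∂μ)
    (VP0 : Matrix (Fin p) (Fin p) ℝ)
    (hVP0 : ∀ k l, VP0 k l =
      (∫ ω, (P0 ω *ᵥ β₀) k * (P0 ω *ᵥ β₀) l ∂μ) -
        (∫ ω, (P0 ω *ᵥ β₀) k ∂μ) * (∫ ω, (P0 ω *ᵥ β₀) l ∂μ))
    (βtilde : Ω → Fin p → ℝ)
    (hβtilde : ∀ ω, βtilde ω = Y ω *ᵥ (S ω *ᵥ (X *ᵥ β₀ + ε ω))) :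
    (∀ k l, (∫ ω, βtilde ω k * βtilde ω l ∂μ) -
        (∫ ω, βtilde ω k ∂μ) * (∫ ω, βtilde ω l ∂μ) =
      (σ ^ 2 • (Xd * EPPT * Xdᵀ) + VP0) k l) ∧
    (∀ k l, (∫ ω, βtilde ω k * βtilde ω l ∂μ) -
        (∫ ω, βtilde ω k ∂μ) * (∫ ω, βtilde ω l ∂μ) =
      (σ ^ 2 • ((Xᵀ * X)⁻¹ : Matrix (Fin p) (Fin p) ℝ) +
        σ ^ 2 • (Xd * (EPPT - PX) * Xdᵀ) + VP0) k l) :=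
  sketched_solution_total_variance_general X hX Xd hXd PX hPX μ S Y hp1 hp2 hp3 hp4 P hP P0 hP0 β₀ σ
    ε hindep hεL2 hεmean hεcov hYSL2 hPPTint EPPT hEPPT VP0 hVP0 βtilde hβtilde
end
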